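/- arXiv:1501.05749 — 5 statements merged into one kernel-verified Lean document; each statement's English description precedes it below -/
import Mathlib

section
/- Let n ≥ 1 be an integer, let A be a positive definite Hermitian n×n complex matrix, and let v ∈ ℂⁿ. Then ‖v‖² ≤ Re(tr A) · Re(v* A⁻¹ v), where ‖v‖² = Σᵢ |vᵢ|². (This is the pointwise linear-algebra inequality, verified in normal coordinates, underlying Lemma 3.5: (ω_u ∧ ω^{n-1}/ω^n)·(ω_u^{n-1} ∧ dψ∧d^cψ/ω^n) ≥ (1/n)(ω_u^n/ω^n)·(dψ∧d^cψ∧ω^{n-1}/ω^n).) -/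
/-!
Write `A = Bᴴ B`. By Cauchy–Schwarz row by row, `‖Bᴴ y‖² ≤ ‖B‖_F² ‖y‖²`, and with `y = B u` this
reads `‖A u‖² ≤ tr A · u* A u`, i.e. `A² ≤ (tr A) A`. Taking `u = A⁻¹ v` gives the inequality.
-/

open scoped ComplexOrder

open Matrix Finset

namespace Matrix

variable {𝕜 m n : Type*} [RCLike 𝕜] [Fintype m] [Fintype n]

lemma re_star_dotProduct_self (x : n → 𝕜) : RCLike.re (star x ⬝ᵥ x) = ∑ i, ‖x i‖ ^ 2 := by
  simp [dotProduct, RCLike.conj_mul]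

lemma re_trace_conjTranspose_mul_self (B : Matrix m n 𝕜) :
    RCLike.re (Bᴴ * B).trace = ∑ j, ∑ i, ‖B i j‖ ^ 2 := by
  simp [trace, mul_apply, RCLike.conj_mul]

lemma re_star_dotProduct_conjTranspose_mul_self_mulVec (B : Matrix m n 𝕜) (u : n → 𝕜) :
    RCLike.re (star u ⬝ᵥ (Bᴴ * B) *ᵥ u) = ∑ i, ‖(B *ᵥ u) i‖ ^ 2 := by
  rw [← mulVec_mulVec, dotProduct_mulVec, ← star_mulVec, re_star_dotProduct_self]

lemma sum_norm_sq_conjTranspose_mulVec_le (B : Matrix m n 𝕜) (x : m → 𝕜) :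
    ∑ j, ‖(Bᴴ *ᵥ x) j‖ ^ 2 ≤ (∑ j, ∑ i, ‖B i j‖ ^ 2) * ∑ i, ‖x i‖ ^ 2 := by
  rw [Finset.sum_mul]
  refine Finset.sum_le_sum fun j _ => ?_
  calc ‖(Bᴴ *ᵥ x) j‖ ^ 2 ≤ (∑ i, ‖B i j‖ * ‖x i‖) ^ 2 := by
        gcongr
        refine (norm_sum_le _ _).trans_eq ?_
        simp [conjTranspose_apply]
    _ ≤ (∑ i, ‖B i j‖ ^ 2) * ∑ i, ‖x i‖ ^ 2 := sum_mul_sq_le_sq_mul_sq _ _ _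

open scoped MatrixOrder in
lemma PosSemidef.sum_norm_sq_mulVec_le {A : Matrix n n 𝕜} (hA : A.PosSemidef) (u : n → 𝕜) :
    ∑ i, ‖(A *ᵥ u) i‖ ^ 2 ≤ RCLike.re A.trace * RCLike.re (star u ⬝ᵥ A *ᵥ u) := by
  classical
  obtain ⟨B, rfl⟩ := CStarAlgebra.nonneg_iff_eq_star_mul_self.mp hA.nonneg
  rw [star_eq_conjTranspose, re_trace_conjTranspose_mul_self,
    re_star_dotProduct_conjTranspose_mul_self_mulVec, ← mulVec_mulVec]
  exact sum_norm_sq_conjTranspose_mulVec_le B (B *ᵥ u)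

end Matrix

theorem stmt_2_general (n : ℕ) (A : Matrix (Fin n) (Fin n) ℂ) (hA : A.PosDef)
    (v : Fin n → ℂ) :
    ∑ i, ‖v i‖ ^ 2
      ≤ A.trace.re * (dotProduct (star v) (A⁻¹.mulVec v)).re := by
  set u := A⁻¹ *ᵥ v
  have hAu : A *ᵥ u = v := by
    rw [mulVec_mulVec, mul_nonsing_inv A ((isUnit_iff_isUnit_det A).mp hA.isUnit), one_mulVec]
  have hquad : star u ⬝ᵥ A *ᵥ u = star v ⬝ᵥ A⁻¹ *ᵥ v := by
    rw [hAu, star_mulVec, hA.isHermitian.inv.eq, ← dotProduct_mulVec]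
  have key := hA.posSemidef.sum_norm_sq_mulVec_le u
  rwa [hquad, hAu] at key

/-- For a positive definite Hermitian `n×n` complex matrix `A` (`n ≥ 1`) and `v ∈ ℂⁿ`,
`‖v‖² ≤ Re(tr A) · Re(v* A⁻¹ v)`. -/
theorem stmt_2 (n : ℕ) (hn : 1 ≤ n) (A : Matrix (Fin n) (Fin n) ℂ) (hA : A.PosDef)
    (v : Fin n → ℂ) :
    ∑ i, ‖v i‖ ^ 2
      ≤ A.trace.re * (dotProduct (star v) (A⁻¹.mulVec v)).re :=
  stmt_2_general n A hA v
end

section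
/- Let (X, μ) be a finite measure space, let ψ : X → ℝ be measurable, and let d > 0, δ > 0, q ≥ 1 satisfy μ({x : ψ(x) ≥ d}) ≥ δ and μ({x : ψ(x) ≤ 0}) ≥ δ. Set T = min(max(ψ,0), d) and M = ∫_X T dμ. Then ∫_X |T − M|^q dμ ≥ d^q · δ^{q+1}. (This is the lower bound ∫|max(ψ,0) − max(ψ−d,0) − M|^{2n/(2n-1)} ω^n ≥ d^{2n/(2n-1)} δ^{1+2n/(2n-1)} in the proof of Lemma 2.6, for a general exponent q.) -/
/-!
Write `A = {ψ ≥ d}` and `B = {ψ ≤ 0}`. The truncation `T` equals `d` on `A` and `0` on `B`,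
so Markov's inequality gives `M ≥ d μ(A) ≥ d δ`, and then, since `|T - M| = M` on `B`,
`∫ |T - M|^q ≥ M^q μ(B) ≥ (d δ)^q δ`.
-/

open MeasureTheory

namespace MeasureTheory

variable {X : Type*} [MeasurableSpace X] {μ : Measure X} [IsFiniteMeasure μ]

theorem mul_measureReal_le_integral_of_forall_mem_le {f : X → ℝ} (hf_nonneg : 0 ≤ᵐ[μ] f)
    (hf_int : Integrable f μ) {s : Set X} {c : ℝ} (hc : 0 ≤ c) (hs : ∀ x ∈ s, c ≤ f x) :
    c * μ.real s ≤ ∫ x, f x ∂μ :=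
  calc c * μ.real s ≤ c * μ.real {x | c ≤ f x} := by gcongr; exacts [measure_ne_top _ _, hs]
    _ ≤ ∫ x, f x ∂μ := mul_meas_ge_le_integral_of_nonneg hf_nonneg hf_int c

theorem le_measureReal_of_ofReal_le {s : Set X} {δ : ℝ}
    (h : ENNReal.ofReal δ ≤ μ s) : δ ≤ μ.real s := by
  rwa [ENNReal.ofReal_le_iff_le_toReal (measure_ne_top μ s)] at h

theorem integrable_abs_sub_const_rpow {f : X → ℝ} (hf : Measurable f) {C : ℝ}
    (hfC : ∀ x, |f x| ≤ C) (c : ℝ) {q : ℝ} (hq : 0 ≤ q) :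
    Integrable (fun x => |f x - c| ^ q) μ :=
  .of_bound ((hf.sub_const c).abs.pow_const q).aestronglyMeasurable ((C + |c|) ^ q) <|
    .of_forall fun x => by
      rw [Real.norm_of_nonneg (by positivity)]
      gcongr
      exact (abs_sub _ _).trans (add_le_add_left (hfC x) _)

end MeasureTheory

theorem min_max_zero_eq_of_le {a d : ℝ} (hd : 0 ≤ d) (h : d ≤ a) : min (max a 0) d = d := by
  rw [max_eq_left (hd.trans h), min_eq_right h]

theorem min_max_zero_eq_zero_of_nonpos {a d : ℝ} (hd : 0 ≤ d) (h : a ≤ 0) :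
    min (max a 0) d = 0 := by
  rw [max_eq_right h, min_eq_left hd]

/-- On a finite measure space, if `μ({ψ ≥ d}) ≥ δ` and `μ({ψ ≤ 0}) ≥ δ` with `d, δ > 0`
and `q ≥ 1`, then for `T = min(max(ψ,0), d)` and `M = ∫ T dμ` one has
`∫ |T − M|^q dμ ≥ d^q · δ^(q+1)`. -/
theorem stmt_5 {X : Type*} [MeasurableSpace X] (μ : Measure X) [IsFiniteMeasure μ]
    (ψ : X → ℝ) (hψ : Measurable ψ) (d δ q : ℝ) (hd : 0 < d) (hδ : 0 < δ) (hq : 1 ≤ q)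
    (h1 : ENNReal.ofReal δ ≤ μ {x | d ≤ ψ x})
    (h2 : ENNReal.ofReal δ ≤ μ {x | ψ x ≤ 0}) :
    d ^ q * δ ^ (q + 1)
      ≤ ∫ x, |min (max (ψ x) 0) d - ∫ y, min (max (ψ y) 0) d ∂μ| ^ q ∂μ := by
  set T : X → ℝ := fun x => min (max (ψ x) 0) d
  have hT_nonneg : ∀ x, 0 ≤ T x := fun x => le_min (le_max_right _ _) hd.le
  have hT_abs : ∀ x, |T x| ≤ d := fun x => by
    rw [abs_of_nonneg (hT_nonneg x)]
    exact min_le_right _ _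
  have hT_meas : Measurable T := (hψ.max measurable_const).min measurable_const
  have hT_int : Integrable T μ := .of_bound hT_meas.aestronglyMeasurable d (.of_forall hT_abs)
  set M := ∫ x, T x ∂μ
  have hM : d * δ ≤ M :=
    calc d * δ ≤ d * μ.real {x | d ≤ ψ x} := by gcongr; exact le_measureReal_of_ofReal_le h1
      _ ≤ M := mul_measureReal_le_integral_of_forall_mem_le (.of_forall hT_nonneg) hT_int hd.le
          fun x hx => (min_max_zero_eq_of_le hd.le hx).ge
  have hM0 : 0 ≤ M := (mul_pos hd hδ).le.trans hM
  calc d ^ q * δ ^ (q + 1) = (d * δ) ^ q * δ := by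
        rw [Real.mul_rpow hd.le hδ.le, Real.rpow_add hδ, Real.rpow_one, mul_assoc]
    _ ≤ M ^ q * μ.real {x | ψ x ≤ 0} := by
        gcongr
        exact le_measureReal_of_ofReal_le h2
    _ ≤ ∫ x, |T x - M| ^ q ∂μ :=
        mul_measureReal_le_integral_of_forall_mem_le (.of_forall fun x => by positivity)
          (integrable_abs_sub_const_rpow hT_meas hT_abs M (by linarith)) (by positivity)
          fun x hx => by simp [T, min_max_zero_eq_zero_of_nonpos hd.le hx, abs_of_nonneg hM0]
end

section
/- Let (X, μ) be a measure space, let p ≥ 1, let f, g : X → ℝ be nonnegative measurable functions with f^p, g^p and |f−g|^p integrable, let 0 < ε ≤ 1 and 0 < α < 1, and suppose ∫_X |f−g|^p dμ ≤ ε^p. If E is a measurable set such that f(x) > (1+ε^α)·g(x) for every x ∈ E, then ∫_E f^p dμ ≤ 2^p · ε^{p(1−α)}. (This is the estimate ∫_{Ω₂} f^p ω^n ≤ 2^p ε^{p−pα} in the proof of Lemma 3.2.) -/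
open MeasureTheory

/-- If `∫|f−g|^p ≤ ε^p` with `p ≥ 1`, `0 < ε ≤ 1`, `0 < α < 1`, and `f > (1+ε^α) g` on a
measurable set `E`, then `∫_E f^p ≤ 2^p ε^(p(1−α))`. -/
theorem stmt_7 {X : Type*} [MeasurableSpace X] (μ : Measure X)
    (p : ℝ) (hp : 1 ≤ p)
    (f g : X → ℝ) (hf0 : ∀ x, 0 ≤ f x) (hg0 : ∀ x, 0 ≤ g x)
    (hfm : Measurable f) (hgm : Measurable g)
    (hfp : Integrable (fun x => f x ^ p) μ) (hgp : Integrable (fun x => g x ^ p) μ)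
    (hfgp : Integrable (fun x => |f x - g x| ^ p) μ)
    (ε α : ℝ) (hε : 0 < ε) (hε1 : ε ≤ 1) (hα : 0 < α) (hα1 : α < 1)
    (hfg : ∫ x, |f x - g x| ^ p ∂μ ≤ ε ^ p)
    (E : Set X) (hE : MeasurableSet E)
    (hEfg : ∀ x ∈ E, (1 + ε ^ α) * g x < f x) :
    ∫ x in E, f x ^ p ∂μ ≤ 2 ^ p * ε ^ (p * (1 - α)) := by
  have hεα : (0:ℝ) < ε ^ α := Real.rpow_pos_of_pos hε α
  have hεα1 : ε ^ α ≤ 1 := Real.rpow_le_one hε.le hε1 hα.le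
  set c : ℝ := (2 / ε ^ α) ^ p with hc
  have hc0 : (0:ℝ) ≤ c := Real.rpow_nonneg (by positivity) p
  have key : ∀ x ∈ E, f x ^ p ≤ c * |f x - g x| ^ p := by
    intro x hx
    have h1 : (1 + ε ^ α) * g x < f x := hEfg x hx
    have hgle : g x ≤ f x := le_trans (by nlinarith [hg0 x]) h1.le
    have habs : |f x - g x| = f x - g x := abs_of_nonneg (by linarith)
    have hfx : f x ≤ (2 / ε ^ α) * |f x - g x| := by
      rw [habs, div_mul_eq_mul_div, le_div_iff₀ hεα]
      nlinarith [hg0 x]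
    calc f x ^ p ≤ ((2 / ε ^ α) * |f x - g x|) ^ p :=
          Real.rpow_le_rpow (hf0 x) hfx (by linarith)
      _ = c * |f x - g x| ^ p := Real.mul_rpow (by positivity) (abs_nonneg _)
  have hInt1 : IntegrableOn (fun x => f x ^ p) E μ := hfp.integrableOn
  have hInt2 : IntegrableOn (fun x => c * |f x - g x| ^ p) E μ :=
    (hfgp.const_mul c).integrableOn
  have step1 : ∫ x in E, f x ^ p ∂μ ≤ ∫ x in E, c * |f x - g x| ^ p ∂μ :=
    setIntegral_mono_on hInt1 hInt2 hE key
  have step2 : ∫ x in E, c * |f x - g x| ^ p ∂μ = c * ∫ x in E, |f x - g x| ^ p ∂μ :=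
    integral_const_mul c _
  have step3 : ∫ x in E, |f x - g x| ^ p ∂μ ≤ ∫ x, |f x - g x| ^ p ∂μ :=
    setIntegral_le_integral hfgp
      (Filter.Eventually.of_forall fun x => Real.rpow_nonneg (abs_nonneg _) p)
  have step4 : c * ε ^ p = 2 ^ p * ε ^ (p * (1 - α)) := by
    rw [hc, Real.div_rpow (by norm_num) hεα.le, ← Real.rpow_mul hε.le,
      div_mul_eq_mul_div, mul_div_assoc, ← Real.rpow_sub hε]
    ring_nf
  calc ∫ x in E, f x ^ p ∂μ ≤ c * ∫ x in E, |f x - g x| ^ p ∂μ := by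
        rw [← step2]; exact step1
    _ ≤ c * ε ^ p := by
        apply mul_le_mul_of_nonneg_left (le_trans step3 hfg) hc0
    _ = 2 ^ p * ε ^ (p * (1 - α)) := step4
end

section
/- Let (X, μ) be a measure space, let f, g : X → ℝ be nonnegative integrable functions, let n ≥ 1 be an integer, let 0 < ε ≤ 1, 0 < α < 1, A > 0, V ≥ 0, and suppose ∫_X |f−g| dμ ≤ ε. Let Ω₁, Ω₂ be disjoint measurable sets with f(x) > (1+ε^α)·g(x) for every x ∈ Ω₂ and ∫_{Ω₁} f dμ ≤ V. Define f̂ = f on Ω₁, f̂ = ε^{−nα}·f on Ω₂, and f̂ = f/A on X∖(Ω₁∪Ω₂). Then ∫_X f̂ dμ ≤ V + 2·ε^{1−(n+1)α} + (1/A)·∫_X f dμ. (This is estimate (3.5) for the modified density f̂ in the proof of Lemma 3.2.) -/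
open MeasureTheory

/-- Estimate (3.5): for the modified density `f̂` equal to `f` on `Ω₁`, `ε^{-nα} f` on `Ω₂`
and `f/A` elsewhere, one has `∫ f̂ ≤ V + 2 ε^{1−(n+1)α} + (1/A) ∫ f`. -/
theorem stmt_8 {X : Type*} [MeasurableSpace X] (μ : Measure X)
    (f g : X → ℝ) (hf0 : ∀ x, 0 ≤ f x) (hg0 : ∀ x, 0 ≤ g x)
    (hf : Integrable f μ) (hg : Integrable g μ)
    (n : ℕ) (hn : 1 ≤ n)
    (ε α A V : ℝ) (hε : 0 < ε) (hε1 : ε ≤ 1) (hα : 0 < α) (hα1 : α < 1)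
    (hA : 0 < A) (hV : 0 ≤ V)
    (hfg : ∫ x, |f x - g x| ∂μ ≤ ε)
    (Ω₁ Ω₂ : Set X) (hΩ₁ : MeasurableSet Ω₁) (hΩ₂ : MeasurableSet Ω₂)
    (hdisj : Disjoint Ω₁ Ω₂)
    (hΩ₂fg : ∀ x ∈ Ω₂, (1 + ε ^ α) * g x < f x)
    (hΩ₁f : ∫ x in Ω₁, f x ∂μ ≤ V)
    (fhat : X → ℝ)
    (hfhat₁ : ∀ x ∈ Ω₁, fhat x = f x)
    (hfhat₂ : ∀ x ∈ Ω₂, fhat x = ε ^ (-((n : ℝ) * α)) * f x)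
    (hfhat₃ : ∀ x, x ∉ Ω₁ ∪ Ω₂ → fhat x = f x / A) :
    ∫ x, fhat x ∂μ ≤ V + 2 * ε ^ (1 - ((n : ℝ) + 1) * α) + (1 / A) * ∫ x, f x ∂μ := by
  set c : ℝ := ε ^ (-((n : ℝ) * α)) with hc
  have hcpos : 0 < c := Real.rpow_pos_of_pos hε _
  -- pointwise decomposition
  have hdec : ∀ x, fhat x = Ω₁.indicator f x + Ω₂.indicator (fun x => c * f x) x
      + (Ω₁ ∪ Ω₂)ᶜ.indicator (fun x => f x / A) x := by
    intro x
    by_cases h1 : x ∈ Ω₁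
    · have h2 : x ∉ Ω₂ := fun h2 => hdisj.ne_of_mem h1 h2 rfl
      have hu : x ∉ (Ω₁ ∪ Ω₂)ᶜ := fun hm => hm (Or.inl h1)
      rw [Set.indicator_of_mem h1, Set.indicator_of_notMem h2,
        Set.indicator_of_notMem hu, hfhat₁ x h1]
      ring
    · by_cases h2 : x ∈ Ω₂
      · have hu : x ∉ (Ω₁ ∪ Ω₂)ᶜ := fun hm => hm (Or.inr h2)
        rw [Set.indicator_of_notMem h1, Set.indicator_of_mem h2,
          Set.indicator_of_notMem hu, hfhat₂ x h2]
        ring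
      · have hu : x ∉ Ω₁ ∪ Ω₂ := fun h => h.elim h1 h2
        rw [Set.indicator_of_notMem h1, Set.indicator_of_notMem h2,
          Set.indicator_of_mem (show x ∈ (Ω₁ ∪ Ω₂)ᶜ from hu), hfhat₃ x hu]
        ring
  have hi1 : Integrable (Ω₁.indicator f) μ := hf.indicator hΩ₁
  have hi2 : Integrable (Ω₂.indicator (fun x => c * f x)) μ := (hf.const_mul c).indicator hΩ₂
  have hi3 : Integrable ((Ω₁ ∪ Ω₂)ᶜ.indicator (fun x => f x / A)) μ :=
    (hf.div_const A).indicator ((hΩ₁.union hΩ₂).compl)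
  have hi12 : Integrable (fun x => Ω₁.indicator f x + Ω₂.indicator (fun x => c * f x) x) μ :=
    hi1.add hi2
  have hIeq : ∫ x, fhat x ∂μ = (∫ x in Ω₁, f x ∂μ) + c * (∫ x in Ω₂, f x ∂μ)
      + (∫ x in (Ω₁ ∪ Ω₂)ᶜ, f x ∂μ) / A := by
    rw [integral_congr_ae (Filter.Eventually.of_forall hdec), integral_add hi12 hi3,
      integral_add hi1 hi2, integral_indicator hΩ₁, integral_indicator hΩ₂,
      integral_indicator ((hΩ₁.union hΩ₂).compl), integral_const_mul, integral_div]
  have hsub : Integrable (fun x => f x - g x) μ := hf.sub hg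
  have hd1 : ∫ x in Ω₂, (f x - g x) ∂μ ≤ ε := by
    have h1 : ∫ x in Ω₂, (f x - g x) ∂μ ≤ ∫ x in Ω₂, |f x - g x| ∂μ :=
      integral_mono hsub.restrict hsub.abs.restrict fun x => le_abs_self _
    exact h1.trans ((setIntegral_le_integral hsub.abs
      (Filter.Eventually.of_forall fun x => abs_nonneg _)).trans hfg)
  have hεα : (0:ℝ) < ε ^ α := Real.rpow_pos_of_pos hε _
  have hg2 : ∫ x in Ω₂, g x ∂μ ≤ ε ^ (1 - α) := by
    have key : ∫ x in Ω₂, (ε ^ α * g x) ∂μ ≤ ∫ x in Ω₂, (f x - g x) ∂μ := by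
      apply setIntegral_mono_on ((hg.const_mul _).restrict) hsub.restrict hΩ₂
      intro x hx
      have := hΩ₂fg x hx
      nlinarith [hg0 x]
    rw [integral_const_mul] at key
    have h2 : ∫ x in Ω₂, g x ∂μ ≤ ε / ε ^ α := by
      rw [le_div_iff₀ hεα]
      linarith
    calc ∫ x in Ω₂, g x ∂μ ≤ ε / ε ^ α := h2
      _ = ε ^ (1 - α) := by rw [Real.rpow_sub hε, Real.rpow_one]
  have hf2 : ∫ x in Ω₂, f x ∂μ ≤ 2 * ε ^ (1 - α) := by
    have hεle : ε ≤ ε ^ (1 - α) := by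
      calc ε = ε ^ (1:ℝ) := (Real.rpow_one ε).symm
        _ ≤ ε ^ (1 - α) := Real.rpow_le_rpow_of_exponent_ge hε hε1 (by linarith)
    have hsplit : ∫ x in Ω₂, f x ∂μ = (∫ x in Ω₂, (f x - g x) ∂μ) + ∫ x in Ω₂, g x ∂μ := by
      rw [← integral_add hsub.restrict hg.restrict]; simp
    linarith
  have hcmul : c * (2 * ε ^ (1 - α)) = 2 * ε ^ (1 - ((n : ℝ) + 1) * α) := by
    rw [hc, ← mul_assoc, mul_comm c 2, mul_assoc, ← Real.rpow_add hε]
    ring_nf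
  have hb2 : c * (∫ x in Ω₂, f x ∂μ) ≤ 2 * ε ^ (1 - ((n : ℝ) + 1) * α) := by
    rw [← hcmul]
    exact mul_le_mul_of_nonneg_left hf2 hcpos.le
  have hb3 : (∫ x in (Ω₁ ∪ Ω₂)ᶜ, f x ∂μ) / A ≤ (1 / A) * ∫ x, f x ∂μ := by
    have h : ∫ x in (Ω₁ ∪ Ω₂)ᶜ, f x ∂μ ≤ ∫ x, f x ∂μ :=
      setIntegral_le_integral hf (Filter.Eventually.of_forall hf0)
    rw [one_div, inv_mul_eq_div]
    exact div_le_div_of_nonneg_right h hA.le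
  rw [hIeq]
  linarith
end

section
/- Let (X, μ) be a measure space, let p ≥ 1, let f, g : X → ℝ be nonnegative measurable functions with f^p, g^p and |f−g|^p integrable, let n ≥ 1 be an integer, let 0 < ε ≤ 1, 0 < α < 1, A > 0, and suppose ∫_X |f−g|^p dμ ≤ ε^p. Let Ω₁, Ω₂ be disjoint measurable sets with f(x) > (1+ε^α)·g(x) for every x ∈ Ω₂. Define f̂ = f on Ω₁, f̂ = ε^{−nα}·f on Ω₂, and f̂ = f/A on X∖(Ω₁∪Ω₂). Then ∫_X f̂^p dμ ≤ ∫_X f^p dμ + 2^p·ε^{p(1−(n+1)α)} + A^{−p}·∫_X f^p dμ. (This is estimate (3.6) for the modified density f̂ in the proof of Lemma 3.2.) -/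
open MeasureTheory

/-- Estimate (3.6): for the modified density `f̂` equal to `f` on `Ω₁`, `ε^{-nα} f` on `Ω₂`
and `f/A` elsewhere, one has `∫ f̂^p ≤ ∫ f^p + 2^p ε^{p(1−(n+1)α)} + A^{−p} ∫ f^p`. -/
theorem stmt_9 {X : Type*} [MeasurableSpace X] (μ : Measure X)
    (p : ℝ) (hp : 1 ≤ p)
    (f g : X → ℝ) (hf0 : ∀ x, 0 ≤ f x) (hg0 : ∀ x, 0 ≤ g x)
    (hfm : Measurable f) (hgm : Measurable g)
    (hfp : Integrable (fun x => f x ^ p) μ) (hgp : Integrable (fun x => g x ^ p) μ)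
    (hfgp : Integrable (fun x => |f x - g x| ^ p) μ)
    (n : ℕ) (hn : 1 ≤ n)
    (ε α A : ℝ) (hε : 0 < ε) (hε1 : ε ≤ 1) (hα : 0 < α) (hα1 : α < 1) (hA : 0 < A)
    (hfg : ∫ x, |f x - g x| ^ p ∂μ ≤ ε ^ p)
    (Ω₁ Ω₂ : Set X) (hΩ₁ : MeasurableSet Ω₁) (hΩ₂ : MeasurableSet Ω₂)
    (hdisj : Disjoint Ω₁ Ω₂)
    (hΩ₂fg : ∀ x ∈ Ω₂, (1 + ε ^ α) * g x < f x)
    (fhat : X → ℝ)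
    (hfhat₁ : ∀ x ∈ Ω₁, fhat x = f x)
    (hfhat₂ : ∀ x ∈ Ω₂, fhat x = ε ^ (-((n : ℝ) * α)) * f x)
    (hfhat₃ : ∀ x, x ∉ Ω₁ ∪ Ω₂ → fhat x = f x / A) :
    ∫ x, fhat x ^ p ∂μ
      ≤ ∫ x, f x ^ p ∂μ + 2 ^ p * ε ^ (p * (1 - ((n : ℝ) + 1) * α))
        + A ^ (-p) * ∫ x, f x ^ p ∂μ := by
  have hp0 : 0 ≤ p := le_trans zero_le_one hp
  set c2 : ℝ := ε ^ (-((n : ℝ) * α)) with hc2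
  have hc2pos : 0 < c2 := Real.rpow_pos_of_pos hε _
  have hfp0 : ∀ x, 0 ≤ f x ^ p := fun x => Real.rpow_nonneg (hf0 x) p
  have hAp : (0:ℝ) < A ^ p := Real.rpow_pos_of_pos hA p
  -- pointwise decomposition
  have hdecomp : ∀ x, fhat x ^ p =
      Set.indicator Ω₁ (fun x => f x ^ p) x
      + Set.indicator Ω₂ (fun x => c2 ^ p * f x ^ p) x
      + Set.indicator (Ω₁ ∪ Ω₂)ᶜ (fun x => A ^ (-p) * f x ^ p) x := by
    intro x
    by_cases h1 : x ∈ Ω₁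
    · have h2 : x ∉ Ω₂ := Set.disjoint_left.mp hdisj h1
      have h3 : x ∉ (Ω₁ ∪ Ω₂)ᶜ := by simp [h1]
      rw [Set.indicator_of_mem h1, Set.indicator_of_notMem h2,
        Set.indicator_of_notMem h3, hfhat₁ x h1]
      ring
    · by_cases h2 : x ∈ Ω₂
      · have h3 : x ∉ (Ω₁ ∪ Ω₂)ᶜ := by simp [h2]
        rw [Set.indicator_of_notMem h1, Set.indicator_of_mem h2,
          Set.indicator_of_notMem h3, hfhat₂ x h2,
          Real.mul_rpow hc2pos.le (hf0 x)]
        ring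
      · have h3 : x ∈ (Ω₁ ∪ Ω₂)ᶜ := by simp [h1, h2]
        have hx3 : x ∉ Ω₁ ∪ Ω₂ := h3
        rw [Set.indicator_of_notMem h1, Set.indicator_of_notMem h2,
          Set.indicator_of_mem h3, hfhat₃ x hx3,
          Real.div_rpow (hf0 x) hA.le, Real.rpow_neg hA.le]
        ring
  have I1 : Integrable (Set.indicator Ω₁ (fun x => f x ^ p)) μ := hfp.indicator hΩ₁
  have I2 : Integrable (Set.indicator Ω₂ (fun x => c2 ^ p * f x ^ p)) μ :=
    (hfp.const_mul _).indicator hΩ₂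
  have I3 : Integrable (Set.indicator (Ω₁ ∪ Ω₂)ᶜ (fun x => A ^ (-p) * f x ^ p)) μ :=
    (hfp.const_mul _).indicator (hΩ₁.union hΩ₂).compl
  have hint : ∫ x, fhat x ^ p ∂μ =
      (∫ x in Ω₁, f x ^ p ∂μ) + c2 ^ p * (∫ x in Ω₂, f x ^ p ∂μ)
      + A ^ (-p) * (∫ x in (Ω₁ ∪ Ω₂)ᶜ, f x ^ p ∂μ) := by
    calc ∫ x, fhat x ^ p ∂μ
        = ∫ x, (Set.indicator Ω₁ (fun x => f x ^ p) x
            + Set.indicator Ω₂ (fun x => c2 ^ p * f x ^ p) x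
            + Set.indicator (Ω₁ ∪ Ω₂)ᶜ (fun x => A ^ (-p) * f x ^ p) x) ∂μ := by
          exact integral_congr_ae (Filter.Eventually.of_forall hdecomp)
      _ = (∫ x, Set.indicator Ω₁ (fun x => f x ^ p) x ∂μ)
            + (∫ x, Set.indicator Ω₂ (fun x => c2 ^ p * f x ^ p) x ∂μ)
            + (∫ x, Set.indicator (Ω₁ ∪ Ω₂)ᶜ (fun x => A ^ (-p) * f x ^ p) x ∂μ) := by
          have I12 : Integrable (fun x => Set.indicator Ω₁ (fun x => f x ^ p) x
              + Set.indicator Ω₂ (fun x => c2 ^ p * f x ^ p) x) μ := I1.add I2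
          rw [integral_add I12 I3, integral_add I1 I2]
      _ = (∫ x in Ω₁, f x ^ p ∂μ) + c2 ^ p * (∫ x in Ω₂, f x ^ p ∂μ)
            + A ^ (-p) * (∫ x in (Ω₁ ∪ Ω₂)ᶜ, f x ^ p ∂μ) := by
          rw [integral_indicator hΩ₁, integral_indicator hΩ₂,
            integral_indicator (hΩ₁.union hΩ₂).compl, integral_const_mul,
            integral_const_mul]
  -- bound on Ω₁ and complement
  have hb1 : ∫ x in Ω₁, f x ^ p ∂μ ≤ ∫ x, f x ^ p ∂μ :=
    setIntegral_le_integral hfp (Filter.Eventually.of_forall hfp0)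
  have hb3 : ∫ x in (Ω₁ ∪ Ω₂)ᶜ, f x ^ p ∂μ ≤ ∫ x, f x ^ p ∂μ :=
    setIntegral_le_integral hfp (Filter.Eventually.of_forall hfp0)
  -- pointwise bound on Ω₂
  have hεα : (0:ℝ) < ε ^ α := Real.rpow_pos_of_pos hε α
  have hεα1 : ε ^ α ≤ 1 := Real.rpow_le_one hε.le hε1 hα.le
  have hpt : ∀ x ∈ Ω₂, f x ^ p ≤ (2 * ε ^ (-α)) ^ p * |f x - g x| ^ p := by
    intro x hx
    have h := hΩ₂fg x hx
    have h1 : 0 < 1 + ε ^ α := by linarith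
    have hgle : g x < f x / (1 + ε ^ α) := by
      rw [lt_div_iff₀ h1]; linarith [mul_comm (g x) (1 + ε ^ α)]
    have hfge : f x * ε ^ α / 2 ≤ f x - g x := by
      have hfx : 0 ≤ f x := hf0 x
      have : f x - f x / (1 + ε ^ α) = f x * ε ^ α / (1 + ε ^ α) := by
        field_simp; ring
      have h2 : f x * ε ^ α / (1 + ε ^ α) ≥ f x * ε ^ α / 2 := by
        apply div_le_div_of_nonneg_left (by positivity) h1 (by linarith)
      nlinarith [hgle, this]
    have hfle : f x ≤ 2 * ε ^ (-α) * |f x - g x| := by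
      have habs : f x - g x ≤ |f x - g x| := le_abs_self _
      have hiv : ε ^ (-α) = (ε ^ α)⁻¹ := by
        rw [Real.rpow_neg hε.le]
      rw [hiv]
      have h2fg : f x * ε ^ α ≤ 2 * |f x - g x| := by nlinarith
      calc f x = f x * ε ^ α * (ε ^ α)⁻¹ := by field_simp
        _ ≤ 2 * |f x - g x| * (ε ^ α)⁻¹ := by
            apply mul_le_mul_of_nonneg_right h2fg (by positivity)
        _ = 2 * (ε ^ α)⁻¹ * |f x - g x| := by ring
    calc f x ^ p ≤ (2 * ε ^ (-α) * |f x - g x|) ^ p :=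
          Real.rpow_le_rpow (hf0 x) hfle hp0
      _ = (2 * ε ^ (-α)) ^ p * |f x - g x| ^ p :=
          Real.mul_rpow (by positivity) (abs_nonneg _)
  have hb2 : ∫ x in Ω₂, f x ^ p ∂μ ≤ (2 * ε ^ (-α)) ^ p * ε ^ p := by
    calc ∫ x in Ω₂, f x ^ p ∂μ
        ≤ ∫ x in Ω₂, (2 * ε ^ (-α)) ^ p * |f x - g x| ^ p ∂μ := by
          apply setIntegral_mono_on hfp.integrableOn
            ((hfgp.const_mul _).integrableOn) hΩ₂ hpt
      _ = (2 * ε ^ (-α)) ^ p * ∫ x in Ω₂, |f x - g x| ^ p ∂μ := integral_const_mul _ _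
      _ ≤ (2 * ε ^ (-α)) ^ p * ∫ x, |f x - g x| ^ p ∂μ := by
          apply mul_le_mul_of_nonneg_left _ (by positivity)
          exact setIntegral_le_integral hfgp
            (Filter.Eventually.of_forall fun x => Real.rpow_nonneg (abs_nonneg _) p)
      _ ≤ (2 * ε ^ (-α)) ^ p * ε ^ p := by
          apply mul_le_mul_of_nonneg_left hfg (by positivity)
  -- final arithmetic
  have hkey : c2 ^ p * ((2 * ε ^ (-α)) ^ p * ε ^ p)
      = 2 ^ p * ε ^ (p * (1 - ((n : ℝ) + 1) * α)) := by
    have e1 : c2 ^ p = ε ^ (-((n : ℝ) * α) * p) := (Real.rpow_mul hε.le _ p).symm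
    have e2 : (ε ^ (-α)) ^ p = ε ^ (-α * p) := (Real.rpow_mul hε.le _ p).symm
    rw [Real.mul_rpow (by norm_num : (0:ℝ) ≤ 2) (Real.rpow_nonneg hε.le _), e1, e2,
      show p * (1 - ((n : ℝ) + 1) * α) = -((n : ℝ) * α) * p + (-α * p + p) by ring,
      Real.rpow_add hε, Real.rpow_add hε]
    ring
  rw [hint]
  have h2' : c2 ^ p * (∫ x in Ω₂, f x ^ p ∂μ)
      ≤ 2 ^ p * ε ^ (p * (1 - ((n : ℝ) + 1) * α)) := by
    rw [← hkey]
    exact mul_le_mul_of_nonneg_left hb2 (by positivity)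
  have h3' : A ^ (-p) * (∫ x in (Ω₁ ∪ Ω₂)ᶜ, f x ^ p ∂μ)
      ≤ A ^ (-p) * ∫ x, f x ^ p ∂μ :=
    mul_le_mul_of_nonneg_left hb3 (Real.rpow_nonneg hA.le _)
  linarith
end
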